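/- arXiv:2109.13292 — 3 statements merged into one kernel-verified Lean document; each statement's English description precedes it below -/
import Mathlib

section
/- Let $X$ be a metric space with bounded geometry and let $\phi: C^*_u(X)^n \to \mathcal{B}(\ell^2(X))$ be a bounded $n$-multilinear map that is $\ell^\infty(X)$-multimodular. If $a_1, \dots, a_n \in \mathcal{B}(\ell^2(X))$ each have propagation at most $r$, then $\phi(a_1, \dots, a_n)$ has propagation at most $n \cdot r$. -/
/- Common setup: `ℓ²(X)`, matrix entries, propagation, approximation,
and the uniform Roe algebra as a set of bounded operators. -/

noncomputable section
open scoped InnerProductSpace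
open Function

/-- `ℓ²(X)` with complex coefficients. -/
abbrev H2 (X : Type*) := lp (fun _ : X => ℂ) 2

/-- The canonical basis vector `δ_x` of `ℓ²(X)`. -/
def deltaV (X : Type*) (x : X) : H2 X :=
  haveI := Classical.decEq X
  lp.single 2 x 1

/-- The matrix entry `a_{xy} = ⟪δ_x, a δ_y⟫` of a bounded operator on `ℓ²(X)`. -/
def entry {X : Type*} (a : H2 X →L[ℂ] H2 X) (x y : X) : ℂ :=
  ⟪deltaV X x, a (deltaV X y)⟫_ℂ

/-- `a` has propagation at most `r`. -/
def HasPropLE {X : Type*} [MetricSpace X] (a : H2 X →L[ℂ] H2 X) (r : ℝ) : Prop :=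
  ∀ x y : X, dist x y > r → entry a x y = 0

/-- `a` can be `ε`-`r`-approximated: there is `b` of propagation at most `r`
with `‖a - b‖ ≤ ε`. -/
def IsApprox {X : Type*} [MetricSpace X] (a : H2 X →L[ℂ] H2 X) (ε r : ℝ) : Prop :=
  ∃ b : H2 X →L[ℂ] H2 X, HasPropLE b r ∧ ‖a - b‖ ≤ ε

/-- The uniform Roe algebra of `X`, as the norm closure of the finite
propagation operators in `B(ℓ²(X))`. -/
def roeSet (X : Type*) [MetricSpace X] : Set (H2 X →L[ℂ] H2 X) :=
  closure {a | ∃ r : ℝ, HasPropLE a r}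

/-- A bounded operator on `ℓ²(X)` is diagonal precisely when it is
multiplication by a function in `ℓ^∞(X)`. -/
def IsDiagonalOp {X : Type*} (d : H2 X →L[ℂ] H2 X) : Prop :=
  ∀ x y : X, x ≠ y → entry d x y = 0

/-- `X` has bounded geometry: the cardinalities of `r`-balls are uniformly
finite for each `r`. -/
def BoundedGeometry (X : Type*) [MetricSpace X] : Prop :=
  ∀ r : ℝ, ∃ N : ℕ, ∀ x : X,
    (Metric.closedBall x r).Finite ∧ (Metric.closedBall x r).ncard ≤ N

/-- `φ` is `ℓ^∞(X)`-multimodular (on the uniform Roe algebra): for every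
diagonal operator `d` (i.e. every multiplication operator by a function in
`ℓ^∞(X)`), `d` can be moved in and out of `φ` and across adjacent arguments. -/
def IsLinftyMultimodular {X : Type*} [MetricSpace X] (n : ℕ)
    (φ : (Fin (n + 1) → (H2 X →L[ℂ] H2 X)) → (H2 X →L[ℂ] H2 X)) : Prop :=
  ∀ d : H2 X →L[ℂ] H2 X, IsDiagonalOp d →
    ∀ a : Fin (n + 1) → (H2 X →L[ℂ] H2 X), (∀ i, a i ∈ roeSet X) →
      (d * φ a = φ (Function.update a 0 (d * a 0)))
      ∧ (∀ (j : Fin (n + 1)) (h : (j : ℕ) + 1 < n + 1),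
          φ (Function.update a j (a j * d))
            = φ (Function.update a ⟨(j : ℕ) + 1, h⟩ (d * a ⟨(j : ℕ) + 1, h⟩)))
      ∧ (φ (Function.update a (Fin.last n) (a (Fin.last n) * d)) = φ a * d)

/-- `φ` is a bounded multilinear map on the uniform Roe algebra. -/
def IsBddMultilinearOnRoe {X : Type*} [MetricSpace X] (n : ℕ)
    (φ : (Fin n → (H2 X →L[ℂ] H2 X)) → (H2 X →L[ℂ] H2 X)) : Prop :=
  (∃ C : ℝ, ∀ a : Fin n → (H2 X →L[ℂ] H2 X), (∀ i, a i ∈ roeSet X) →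
      ‖φ a‖ ≤ C * ∏ i, ‖a i‖)
  ∧ (∀ (a : Fin n → (H2 X →L[ℂ] H2 X)), (∀ i, a i ∈ roeSet X) →
      ∀ (i : Fin n), ∀ x y : H2 X →L[ℂ] H2 X, x ∈ roeSet X → y ∈ roeSet X →
        φ (Function.update a i (x + y))
          = φ (Function.update a i x) + φ (Function.update a i y))
  ∧ (∀ (a : Fin n → (H2 X →L[ℂ] H2 X)), (∀ i, a i ∈ roeSet X) →
      ∀ (i : Fin n), ∀ (c : ℂ) (x : H2 X →L[ℂ] H2 X), x ∈ roeSet X →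
        φ (Function.update a i (c • x)) = c • φ (Function.update a i x))

/-!
Fix `x, y` with `dist x y > (n + 1) * r` and let `P k` be multiplication by the indicator of the
closed ball of radius `k * r` about `x`. Since `a i` has propagation at most `r`,
`P i * a i = P i * a i * P (i + 1)`. Multimodularity moves `P 0` from the left of `φ a` into the
first argument, then repeatedly trades the right factor `P (i + 1)` of the `i`-th argument for a
left factor of the next one, and finally pulls `P (n + 1)` out on the right:
`P 0 * φ a = P 0 * φ a * P (n + 1)`. The `(x, y)` entry of the right-hand side vanishes because
`y` lies outside the ball of radius `(n + 1) * r`.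
-/

section

variable {X : Type*}

lemma deltaV_apply_ne {x j : X} (h : j ≠ x) : (deltaV X x : X → ℂ) j = 0 :=
  @lp.single_apply_ne X (fun _ => ℂ) _ (Classical.decEq X) 2 x 1 j h

lemma entry_eq_apply (a : H2 X →L[ℂ] H2 X) (x y : X) :
    entry a x y = a (deltaV X y) x := by
  classical
  simp [entry, deltaV, lp.inner_single_left]

lemma ext_entry {a b : H2 X →L[ℂ] H2 X} (h : ∀ x y, entry a x y = entry b x y) : a = b := by
  classical
  refine lp.ext_continuousLinearMap ENNReal.ofNat_ne_top fun y => ?_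
  refine ContinuousLinearMap.ext_ring (lp.ext <| funext fun x => ?_)
  simpa [entry_eq_apply, deltaV] using h x y

def indicatorOp (S : Set X) : H2 X →L[ℂ] H2 X :=
  LinearMap.mkContinuous
    { toFun := fun f =>
        ⟨S.indicator (f : X → ℂ), (lp.memℓp f).mono' fun _ => norm_indicator_le_norm_self _ _⟩
      map_add' := fun f g => lp.ext <| Set.indicator_add' S _ _
      map_smul' := fun c f => lp.ext <| Set.indicator_const_smul S c _ }
    1 fun f => by
      simpa using lp.norm_mono two_ne_zero fun _ => norm_indicator_le_norm_self _ _

lemma coe_indicatorOp_apply (S : Set X) (f : H2 X) :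
    (indicatorOp S f : X → ℂ) = S.indicator (f : X → ℂ) := rfl

lemma indicatorOp_deltaV (S : Set X) (v : X) :
    indicatorOp S (deltaV X v) = S.indicator (fun _ => deltaV X v) v := by
  refine lp.ext <| funext fun j => ?_
  by_cases hj : j = v
  · subst hj
    by_cases hv : j ∈ S <;> simp [coe_indicatorOp_apply, hv]
  · by_cases hv : v ∈ S <;> by_cases hjS : j ∈ S <;>
      simp [coe_indicatorOp_apply, hv, hjS, deltaV_apply_ne hj]

lemma entry_indicatorOp_mul (S : Set X) (b : H2 X →L[ℂ] H2 X) (u v : X) :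
    entry (indicatorOp S * b) u v = S.indicator (entry b · v) u := by
  simp only [entry_eq_apply, mul_apply_eq_comp, coe_indicatorOp_apply]

lemma entry_mul_indicatorOp (b : H2 X →L[ℂ] H2 X) (S : Set X) (u v : X) :
    entry (b * indicatorOp S) u v = S.indicator (entry b u) v := by
  by_cases hv : v ∈ S <;> simp [entry_eq_apply, indicatorOp_deltaV, hv]

lemma isDiagonalOp_indicatorOp (S : Set X) : IsDiagonalOp (indicatorOp S) := by
  intro u v huv
  rw [← mul_one (indicatorOp S), entry_indicatorOp_mul]
  refine Set.indicator_apply_eq_zero.2 fun _ => ?_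
  rw [entry_eq_apply, one_apply_eq_self]
  exact deltaV_apply_ne huv

section Propagation

variable [MetricSpace X]

lemma HasPropLE.mem_roeSet {a : H2 X →L[ℂ] H2 X} {r : ℝ} (ha : HasPropLE a r) :
    a ∈ roeSet X :=
  subset_closure ⟨r, ha⟩

lemma HasPropLE.indicatorOp_mul {b : H2 X →L[ℂ] H2 X} {r : ℝ} (hb : HasPropLE b r)
    (S : Set X) :
    HasPropLE (indicatorOp S * b) r := fun u v huv => by
  rw [entry_indicatorOp_mul]
  exact Set.indicator_apply_eq_zero.2 fun _ => hb u v huv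

lemma indicatorOp_mul_mul_indicatorOp_of_closedBall_subset {b : H2 X →L[ℂ] H2 X} {r : ℝ}
    (hb : HasPropLE b r) {S T : Set X} (hST : ∀ u ∈ S, Metric.closedBall u r ⊆ T) :
    indicatorOp S * b * indicatorOp T = indicatorOp S * b := by
  refine ext_entry fun u v => ?_
  rw [entry_mul_indicatorOp]
  by_cases hv : v ∈ T
  · exact Set.indicator_of_mem hv _
  rw [Set.indicator_of_notMem hv, entry_indicatorOp_mul]
  by_cases hu : u ∈ S
  · rw [Set.indicator_of_mem hu]
    refine (hb u v <| lt_of_not_ge fun huv => hv ?_).symm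
    exact hST u hu (Metric.mem_closedBall'.2 huv)
  · rw [Set.indicator_of_notMem hu]

end Propagation

section Multimodular

variable {n : ℕ} (P : ℕ → H2 X →L[ℂ] H2 X) (a : Fin (n + 1) → H2 X →L[ℂ] H2 X)

def prefixMul (j : ℕ) : Fin (n + 1) → H2 X →L[ℂ] H2 X :=
  fun i => if (i : ℕ) ≤ j then P i * a i else a i

lemma update_zero_eq_prefixMul_zero : update a 0 (P 0 * a 0) = prefixMul P a 0 := by
  funext i
  by_cases hi : i = 0
  · subst hi
    simp [prefixMul]
  · have : (i : ℕ) ≠ 0 := Fin.val_ne_of_ne hi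
    simp [prefixMul, hi, this]

lemma update_succ_prefixMul {j : ℕ} (hj : j + 1 < n + 1) :
    update (prefixMul P a j) ⟨j + 1, hj⟩ (P (j + 1) * prefixMul P a j ⟨j + 1, hj⟩) =
      prefixMul P a (j + 1) := by
  funext i
  by_cases hi : i = ⟨j + 1, hj⟩
  · subst hi
    simp [prefixMul]
  · have : (i : ℕ) ≠ j + 1 := fun h => hi (Fin.ext h)
    simp only [update_apply, hi, if_false, prefixMul]
    split_ifs <;> first | rfl | omega

variable {P a}

lemma update_prefixMul_mul_eq_self
    (habs : ∀ i : Fin (n + 1), P i * a i * P ((i : ℕ) + 1) = P i * a i)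
    {j : ℕ} (hj : j < n + 1) :
    update (prefixMul P a j) ⟨j, hj⟩ (prefixMul P a j ⟨j, hj⟩ * P (j + 1)) =
      prefixMul P a j := by
  rw [update_eq_iff]
  simp [prefixMul, habs ⟨j, hj⟩]

variable [MetricSpace X]

lemma prefixMul_mem_roeSet (ha : ∀ i, a i ∈ roeSet X)
    (hPa : ∀ i : Fin (n + 1), P i * a i ∈ roeSet X)
    (j : ℕ) (i : Fin (n + 1)) : prefixMul P a j i ∈ roeSet X := by
  unfold prefixMul
  split_ifs
  exacts [hPa i, ha i]

variable {φ : (Fin (n + 1) → (H2 X →L[ℂ] H2 X)) → (H2 X →L[ℂ] H2 X)}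

lemma IsLinftyMultimodular.mul_apply_eq_apply_prefixMul (hmod : IsLinftyMultimodular n φ)
    (hP : ∀ k, IsDiagonalOp (P k)) (ha : ∀ i, a i ∈ roeSet X)
    (hPa : ∀ i : Fin (n + 1), P i * a i ∈ roeSet X)
    (habs : ∀ i : Fin (n + 1), P i * a i * P ((i : ℕ) + 1) = P i * a i) :
    ∀ j ≤ n, P 0 * φ a = φ (prefixMul P a j)
  | 0, _ => by
    rw [(hmod _ (hP 0) a ha).1, update_zero_eq_prefixMul_zero]
  | j + 1, hj => by
    have hj' : j < n + 1 := by omega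
    rw [hmod.mul_apply_eq_apply_prefixMul hP ha hPa habs j (by omega),
      ← update_prefixMul_mul_eq_self habs hj',
      (hmod _ (hP (j + 1)) _ (prefixMul_mem_roeSet ha hPa j)).2.1 ⟨j, hj'⟩
        (show j + 1 < n + 1 by omega),
      update_succ_prefixMul]

lemma IsLinftyMultimodular.mul_apply_mul_eq (hmod : IsLinftyMultimodular n φ)
    (hP : ∀ k, IsDiagonalOp (P k)) (ha : ∀ i, a i ∈ roeSet X)
    (hPa : ∀ i : Fin (n + 1), P i * a i ∈ roeSet X)
    (habs : ∀ i : Fin (n + 1), P i * a i * P ((i : ℕ) + 1) = P i * a i) :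
    P 0 * φ a * P (n + 1) = P 0 * φ a := by
  rw [hmod.mul_apply_eq_apply_prefixMul hP ha hPa habs n le_rfl,
    ← (hmod _ (hP (n + 1)) _ (prefixMul_mem_roeSet ha hPa n)).2.2]
  exact congrArg φ (update_prefixMul_mul_eq_self habs (Nat.lt_succ_self n))

end Multimodular

end

theorem multimodular_propagation_bound_general
    {X : Type*} [MetricSpace X] (n : ℕ)
    (φ : (Fin (n + 1) → (H2 X →L[ℂ] H2 X)) → (H2 X →L[ℂ] H2 X))
    (hmod : IsLinftyMultimodular n φ)
    (r : ℝ)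
    (a : Fin (n + 1) → (H2 X →L[ℂ] H2 X)) (ha : ∀ i, HasPropLE (a i) r) :
    HasPropLE (φ a) ((n + 1) * r) := by
  intro x y hxy
  set P : ℕ → H2 X →L[ℂ] H2 X := fun k => indicatorOp (Metric.closedBall x (k * r))
  have hPa (i : Fin (n + 1)) : HasPropLE (P i * a i) r := (ha i).indicatorOp_mul _
  have habs (i : Fin (n + 1)) : P i * a i * P ((i : ℕ) + 1) = P i * a i :=
    indicatorOp_mul_mul_indicatorOp_of_closedBall_subset (ha i) fun u hu =>
      Metric.closedBall_subset_closedBall' <| by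
        push_cast
        linarith [Metric.mem_closedBall.1 hu]
  have key : P 0 * φ a * P (n + 1) = P 0 * φ a :=
    hmod.mul_apply_mul_eq (fun _ => isDiagonalOp_indicatorOp _) (fun i => (ha i).mem_roeSet)
      (fun i => (hPa i).mem_roeSet) habs
  have hx : x ∈ Metric.closedBall x ((0 : ℕ) * r) := by simp
  have hy : y ∉ Metric.closedBall x ((n + 1 : ℕ) * r) := by
    rw [Metric.mem_closedBall', not_le]
    exact_mod_cast hxy
  rw [← Set.indicator_of_mem hx (entry (φ a) · y), ← entry_indicatorOp_mul, ← key,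
    entry_mul_indicatorOp, Set.indicator_of_notMem hy]

/-- If `φ` is a bounded multilinear `ℓ^∞(X)`-multimodular map on the uniform
Roe algebra of a bounded geometry space `X`, taking values in `B(ℓ²(X))`, and
each of the `n` operators `a i` has propagation at most `r`, then `φ a` has
propagation at most `n * r`. -/
theorem multimodular_propagation_bound
    {X : Type*} [MetricSpace X] (hX : BoundedGeometry X) (n : ℕ)
    (φ : (Fin (n + 1) → (H2 X →L[ℂ] H2 X)) → (H2 X →L[ℂ] H2 X))
    (hφ : IsBddMultilinearOnRoe (n + 1) φ)
    (hmod : IsLinftyMultimodular n φ)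
    (r : ℝ) (hr : 0 ≤ r)
    (a : Fin (n + 1) → (H2 X →L[ℂ] H2 X)) (ha : ∀ i, HasPropLE (a i) r) :
    HasPropLE (φ a) ((n + 1) * r) :=
  multimodular_propagation_bound_general n φ hmod r a ha
end
end

section
/- Let $X$ be a metric space, let $I$ be a countable set, and let $(a_i)_{i\in I}$ be a family of operators in $C^*_u(X)$ such that for all $\lambda \in \mathbb{D}^I$ the sum $a_\lambda = \sum_i \lambda_i a_i$ converges in the weak operator topology to an element of $C^*_u(X)$. For $\epsilon, r > 0$ let $U_{\epsilon,r} = \{\lambda \in \mathbb{D}^I : a_\lambda \text{ can be } \epsilon\text{-}r\text{-approximated}\}$. Then $U_{\epsilon,r}$ is closed in $\mathbb{D}^I$ with the product topology. -/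
/- Common setup: `ℓ²(X)`, matrix entries, propagation, approximation,
and the uniform Roe algebra as a set of bounded operators. -/

noncomputable section
open scoped InnerProductSpace
open Function

open Filter Topology

section Aux

variable {X : Type*} {I : Type*}
variable (a : I → (H2 X →L[ℂ] H2 X))
variable (S : (I → {z : ℂ // ‖z‖ ≤ 1}) → (H2 X →L[ℂ] H2 X))

/-- Key summability: choosing unimodular coefficients shows that the matrix
entries of the family are absolutely summable. -/
lemma summable_entry_norm_aux
    (hS_sum : ∀ (lam : I → {z : ℂ // ‖z‖ ≤ 1}) (u v : H2 X),
      HasSum (fun i => (lam i : ℂ) * ⟪u, a i v⟫_ℂ) ⟪u, S lam v⟫_ℂ)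
    (u v : H2 X) : Summable fun i => ‖⟪u, a i v⟫_ℂ‖ := by
  set c : I → ℂ := fun i => ⟪u, a i v⟫_ℂ with hc
  have hnorm : ∀ i, ‖(starRingEnd ℂ) (c i) / (‖c i‖ : ℂ)‖ ≤ 1 := by
    intro i
    rcases eq_or_ne (c i) 0 with h | h
    · simp [h]
    · rw [norm_div, RCLike.norm_conj, Complex.norm_real, norm_norm, div_self]
      exact norm_ne_zero_iff.mpr h
  set lam : I → {z : ℂ // ‖z‖ ≤ 1} := fun i => ⟨_, hnorm i⟩ with hlam
  have h := hS_sum lam u v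
  have he : (fun i => (lam i : ℂ) * c i) = fun i => ((‖c i‖ : ℝ) : ℂ) := by
    funext i
    rcases eq_or_ne (c i) 0 with h0 | h0
    · simp [hlam, h0]
    · have hne : (‖c i‖ : ℂ) ≠ 0 := by
        simpa using norm_ne_zero_iff.mpr h0
      show (starRingEnd ℂ) (c i) / (‖c i‖ : ℂ) * c i = _
      calc (starRingEnd ℂ) (c i) / (‖c i‖ : ℂ) * c i
          = ((starRingEnd ℂ) (c i) * c i) / (‖c i‖ : ℂ) := by ring
        _ = ((‖c i‖ : ℂ)) ^ 2 / (‖c i‖ : ℂ) := by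
            rw [show (starRingEnd ℂ) (c i) * c i = ((‖c i‖ : ℂ)) ^ 2 from by
              exact_mod_cast RCLike.conj_mul (c i)]
        _ = ((‖c i‖ : ℝ) : ℂ) := by
            rw [pow_two, mul_div_assoc, div_self hne, mul_one]
  rw [he] at h
  exact Complex.summable_ofReal.mp h.summable

/-- Uniform bound on `S`. -/
lemma S_bounded_aux [Nonempty (I → {z : ℂ // ‖z‖ ≤ 1})]
    (hS_sum : ∀ (lam : I → {z : ℂ // ‖z‖ ≤ 1}) (u v : H2 X),
      HasSum (fun i => (lam i : ℂ) * ⟪u, a i v⟫_ℂ) ⟪u, S lam v⟫_ℂ) :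
    ∃ M : ℝ, 0 ≤ M ∧ ∀ lam, ‖S lam‖ ≤ M := by
  have key : ∀ (u v : H2 X) lam, ‖⟪u, S lam v⟫_ℂ‖ ≤ ∑' i, ‖⟪u, a i v⟫_ℂ‖ := by
    intro u v lam
    have hsum := hS_sum lam u v
    have hsummable : Summable fun i => ‖(lam i : ℂ) * ⟪u, a i v⟫_ℂ‖ := by
      refine Summable.of_nonneg_of_le (fun i => norm_nonneg _) (fun i => ?_)
        (summable_entry_norm_aux a S hS_sum u v)
      rw [norm_mul]
      exact mul_le_of_le_one_left (norm_nonneg _) (lam i).2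
    rw [← hsum.tsum_eq]
    refine (norm_tsum_le_tsum_norm hsummable).trans ?_
    refine Summable.tsum_le_tsum (fun i => ?_) hsummable (summable_entry_norm_aux a S hS_sum u v)
    rw [norm_mul]
    exact mul_le_of_le_one_left (norm_nonneg _) (lam i).2
  have step1 : ∀ v : H2 X, ∃ C, ∀ lam, ‖S lam v‖ ≤ C := by
    intro v
    obtain ⟨C, hC⟩ := banach_steinhaus (g := fun lam => innerSL ℂ (S lam v))
      (fun u => ⟨∑' i, ‖⟪u, a i v⟫_ℂ‖, fun lam => by
        show ‖innerSL ℂ (S lam v) u‖ ≤ _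
        rw [innerSL_apply_apply, norm_inner_symm]
        exact key u v lam⟩)
    exact ⟨C, fun lam => by
      have := hC lam
      rwa [innerSL_apply_norm] at this⟩
  obtain ⟨M, hM⟩ := banach_steinhaus (g := S) step1
  exact ⟨max M 0, le_max_right _ _, fun lam => (hM lam).trans (le_max_left _ _)⟩

end Aux

section Aux2

variable {X : Type*} {I : Type*}
variable (a : I → (H2 X →L[ℂ] H2 X))
variable (S : (I → {z : ℂ // ‖z‖ ≤ 1}) → (H2 X →L[ℂ] H2 X))

/-- WOT-continuity of `S` along sequences converging in the product topology:
it follows from dominated convergence using the absolute summability of entries. -/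
lemma tendsto_inner_S_aux
    (hS_sum : ∀ (lam : I → {z : ℂ // ‖z‖ ≤ 1}) (u v : H2 X),
      HasSum (fun i => (lam i : ℂ) * ⟪u, a i v⟫_ℂ) ⟪u, S lam v⟫_ℂ)
    (lamseq : ℕ → (I → {z : ℂ // ‖z‖ ≤ 1})) (lam : I → {z : ℂ // ‖z‖ ≤ 1})
    (hconv : Tendsto lamseq atTop (𝓝 lam)) (u v : H2 X) :
    Tendsto (fun n => ⟪u, S (lamseq n) v⟫_ℂ) atTop (𝓝 ⟪u, S lam v⟫_ℂ) := by
  have hpt : ∀ i, Tendsto (fun n => ((lamseq n i : ℂ))) atTop (𝓝 (lam i : ℂ)) := by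
    intro i
    have h1 : Tendsto (fun n => lamseq n i) atTop (𝓝 (lam i)) :=
      ((continuous_apply i).tendsto lam).comp hconv
    exact ((continuous_subtype_val.tendsto (lam i))).comp h1
  have hkey := tendsto_tsum_of_dominated_convergence
      (f := fun n i => (lamseq n i : ℂ) * ⟪u, a i v⟫_ℂ)
      (g := fun i => (lam i : ℂ) * ⟪u, a i v⟫_ℂ)
      (bound := fun i => ‖⟪u, a i v⟫_ℂ‖)
      (summable_entry_norm_aux a S hS_sum u v)
      (fun i => (hpt i).mul tendsto_const_nhds)
      (Filter.Eventually.of_forall fun n => fun i => by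
        rw [norm_mul]; exact mul_le_of_le_one_left (norm_nonneg _) (lamseq n i).2)
  have h1 : (fun n => ∑' i, (lamseq n i : ℂ) * ⟪u, a i v⟫_ℂ)
      = fun n => ⟪u, S (lamseq n) v⟫_ℂ := funext fun n => (hS_sum (lamseq n) u v).tsum_eq
  have h2 : (∑' i, (lam i : ℂ) * ⟪u, a i v⟫_ℂ) = ⟪u, S lam v⟫_ℂ := (hS_sum lam u v).tsum_eq
  rw [h1, h2] at hkey
  exact hkey

end Aux2

set_option maxHeartbeats 1000000 in
/-- Let `(a i)` be a countable family in the uniform Roe algebra such that for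
every `λ ∈ 𝔻^I` the sum `a_λ = ∑ λ i • a i` converges in the weak operator
topology to an element `S λ` of the uniform Roe algebra.  Then for `ε, r > 0`
the set `U_{ε,r}` of those `λ` for which `S λ` can be `ε`-`r`-approximated is
closed in `𝔻^I` with the product topology. -/
theorem isClosed_approximable_coefficients
    {X : Type*} [MetricSpace X] {I : Type*} [Countable I]
    (a : I → (H2 X →L[ℂ] H2 X)) (ha : ∀ i, a i ∈ roeSet X)
    (S : (I → {z : ℂ // ‖z‖ ≤ 1}) → (H2 X →L[ℂ] H2 X))
    (hS_roe : ∀ lam : I → {z : ℂ // ‖z‖ ≤ 1}, S lam ∈ roeSet X)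
    (hS_sum : ∀ (lam : I → {z : ℂ // ‖z‖ ≤ 1}) (u v : H2 X),
      HasSum (fun i => (lam i : ℂ) * ⟪u, a i v⟫_ℂ) ⟪u, S lam v⟫_ℂ)
    (ε r : ℝ) (hε : 0 < ε) (hr : 0 < r) :
    IsClosed {lam : I → {z : ℂ // ‖z‖ ≤ 1} | IsApprox (S lam) ε r} := by
  classical
  haveI : Nonempty (I → {z : ℂ // ‖z‖ ≤ 1}) := ⟨fun _ => ⟨0, by simp⟩⟩
  obtain ⟨M, hM0, hM⟩ := S_bounded_aux a S hS_sum
  apply IsSeqClosed.isClosed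
  intro lamseq lam hmem hconv
  simp only [Set.mem_setOf_eq] at hmem ⊢
  choose b hbprop hbdist using hmem
  set C : ℝ := M + ε with hCdef
  have hC0 : 0 < C := by positivity
  have hbC : ∀ n (u v : H2 X), ‖⟪u, b n v⟫_ℂ‖ ≤ C * ‖u‖ * ‖v‖ := by
    intro n u v
    have h1 : ‖b n‖ ≤ C := by
      calc ‖b n‖ = ‖S (lamseq n) - (S (lamseq n) - b n)‖ := by rw [sub_sub_cancel]
        _ ≤ ‖S (lamseq n)‖ + ‖S (lamseq n) - b n‖ := norm_sub_le _ _
        _ ≤ M + ε := add_le_add (hM _) (hbdist n)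
    have h2 : ‖b n v‖ ≤ C * ‖v‖ :=
      ((b n).le_opNorm v).trans (mul_le_mul_of_nonneg_right h1 (norm_nonneg v))
    calc ‖⟪u, b n v⟫_ℂ‖ ≤ ‖u‖ * ‖b n v‖ := norm_inner_le_norm _ _
      _ ≤ ‖u‖ * (C * ‖v‖) := mul_le_mul_of_nonneg_left h2 (norm_nonneg u)
      _ = C * ‖u‖ * ‖v‖ := by ring
  -- an ultrafilter extending `atTop`
  let U : Ultrafilter ℕ := Ultrafilter.of atTop
  have hUle : (U : Filter ℕ) ≤ atTop := Ultrafilter.of_le atTop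
  -- ultrafilter limits of the matrix coefficients of the `b n`
  have hphi : ∀ u v : H2 X, ∃ z : ℂ, Tendsto (fun n => ⟪u, b n v⟫_ℂ) U (𝓝 z) := by
    intro u v
    obtain ⟨z, _, hz⟩ := (isCompact_closedBall (0 : ℂ) (C * ‖u‖ * ‖v‖)).ultrafilter_le_nhds
      (U.map (fun n => ⟪u, b n v⟫_ℂ)) (by
        rw [Ultrafilter.coe_map, Filter.le_principal_iff, Filter.mem_map]
        refine Filter.univ_mem' fun n => ?_
        simpa [Metric.mem_closedBall, dist_zero_right] using hbC n u v)
    rw [Ultrafilter.coe_map] at hz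
    exact ⟨z, hz⟩
  choose φ hφ using hphi
  have hφ_norm : ∀ u v, ‖φ u v‖ ≤ C * ‖u‖ * ‖v‖ := fun u v =>
    le_of_tendsto (hφ u v).norm (Filter.Eventually.of_forall fun n => hbC n u v)
  have hφ_addu : ∀ u u' v, φ (u + u') v = φ u v + φ u' v := by
    intro u u' v
    refine tendsto_nhds_unique (hφ (u + u') v) (((hφ u v).add (hφ u' v)).congr fun n => ?_)
    rw [← inner_add_left]
  have hφ_smulu : ∀ (c : ℂ) u v, φ (c • u) v = (starRingEnd ℂ) c * φ u v := by
    intro c u v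
    refine tendsto_nhds_unique (hφ (c • u) v) (((hφ u v).const_mul _).congr fun n => ?_)
    rw [← inner_smul_left]
  have hφ_addv : ∀ u v v', φ u (v + v') = φ u v + φ u v' := by
    intro u v v'
    refine tendsto_nhds_unique (hφ u (v + v')) (((hφ u v).add (hφ u v')).congr fun n => ?_)
    rw [← inner_add_right, ← map_add]
  have hφ_smulv : ∀ (c : ℂ) u v, φ u (c • v) = c * φ u v := by
    intro c u v
    refine tendsto_nhds_unique (hφ u (c • v)) (((hφ u v).const_mul _).congr fun n => ?_)
    rw [← inner_smul_right, ← map_smul]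
  -- the limit operator, via Riesz representation
  let F : H2 X → (H2 X →L[ℂ] ℂ) := fun v =>
    LinearMap.mkContinuous
      { toFun := fun u => (starRingEnd ℂ) (φ u v)
        map_add' := fun u u' => by
          show (starRingEnd ℂ) (φ (u + u') v)
              = (starRingEnd ℂ) (φ u v) + (starRingEnd ℂ) (φ u' v)
          rw [hφ_addu, map_add]
        map_smul' := fun c u => by
          show (starRingEnd ℂ) (φ (c • u) v)
              = (RingHom.id ℂ) c • (starRingEnd ℂ) (φ u v)
          rw [hφ_smulu, map_mul, Complex.conj_conj, RingHom.id_apply, smul_eq_mul] }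
      (C * ‖v‖)
      (fun u => by
        show ‖(starRingEnd ℂ) (φ u v)‖ ≤ _
        rw [RCLike.norm_conj]
        calc ‖φ u v‖ ≤ C * ‖u‖ * ‖v‖ := hφ_norm u v
          _ = C * ‖v‖ * ‖u‖ := by ring)
  have hFapp : ∀ v u, F v u = (starRingEnd ℂ) (φ u v) := fun v u => rfl
  let T : H2 X → H2 X := fun v => (InnerProductSpace.toDual ℂ (H2 X)).symm (F v)
  have hT : ∀ u v, ⟪u, T v⟫_ℂ = φ u v := by
    intro u v
    have h1 : ⟪T v, u⟫_ℂ = F v u := InnerProductSpace.toDual_symm_apply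
    calc ⟪u, T v⟫_ℂ = (starRingEnd ℂ) ⟪T v, u⟫_ℂ := (inner_conj_symm u (T v)).symm
      _ = (starRingEnd ℂ) (F v u) := by rw [h1]
      _ = φ u v := by rw [hFapp, Complex.conj_conj]
  have hT_norm : ∀ v, ‖T v‖ ≤ C * ‖v‖ := by
    intro v
    have h1 : ‖T v‖ = ‖F v‖ := LinearIsometryEquiv.norm_map _ _
    rw [h1]
    exact LinearMap.mkContinuous_norm_le _ (by positivity) _
  let blin : H2 X →ₗ[ℂ] H2 X :=
    { toFun := T
      map_add' := fun v v' => by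
        refine ext_inner_left ℂ fun u => ?_
        show ⟪u, T (v + v')⟫_ℂ = ⟪u, T v + T v'⟫_ℂ
        rw [inner_add_right, hT, hT, hT, hφ_addv]
      map_smul' := fun c v => by
        refine ext_inner_left ℂ fun u => ?_
        show ⟪u, T (c • v)⟫_ℂ = ⟪u, c • T v⟫_ℂ
        rw [inner_smul_right, hT, hT, hφ_smulv] }
  let blim : H2 X →L[ℂ] H2 X := blin.mkContinuous C (fun v => hT_norm v)
  have hblim_inner : ∀ u v, ⟪u, blim v⟫_ℂ = φ u v := fun u v => hT u v
  refine ⟨blim, ?_, ?_⟩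
  · -- propagation of the limit operator
    intro x y hxy
    have heq : (fun n : ℕ => ⟪deltaV X x, b n (deltaV X y)⟫_ℂ) = fun _ => (0 : ℂ) :=
      funext fun n => hbprop n x y hxy
    have hφδ := hφ (deltaV X x) (deltaV X y)
    rw [heq] at hφδ
    have hz : φ (deltaV X x) (deltaV X y) = 0 :=
      tendsto_nhds_unique hφδ tendsto_const_nhds
    show ⟪deltaV X x, blim (deltaV X y)⟫_ℂ = 0
    rw [hblim_inner]
    exact hz
  · -- the approximation estimate
    refine ContinuousLinearMap.opNorm_le_bound _ hε.le fun v => ?_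
    have key : ∀ u, ‖⟪u, (S lam - blim) v⟫_ℂ‖ ≤ ε * ‖v‖ * ‖u‖ := by
      intro u
      have h1 : Tendsto (fun n => ⟪u, S (lamseq n) v⟫_ℂ - ⟪u, b n v⟫_ℂ) U
          (𝓝 (⟪u, S lam v⟫_ℂ - φ u v)) :=
        ((tendsto_inner_S_aux a S hS_sum lamseq lam hconv u v).mono_left hUle).sub (hφ u v)
      have h2 : ⟪u, (S lam - blim) v⟫_ℂ = ⟪u, S lam v⟫_ℂ - φ u v := by
        rw [ContinuousLinearMap.sub_apply, inner_sub_right, hblim_inner]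
      rw [h2]
      refine le_of_tendsto h1.norm (Filter.Eventually.of_forall fun n => ?_)
      have h3 : ⟪u, S (lamseq n) v⟫_ℂ - ⟪u, b n v⟫_ℂ = ⟪u, (S (lamseq n) - b n) v⟫_ℂ := by
        rw [ContinuousLinearMap.sub_apply, inner_sub_right]
      rw [h3]
      calc ‖⟪u, (S (lamseq n) - b n) v⟫_ℂ‖ ≤ ‖u‖ * ‖(S (lamseq n) - b n) v‖ :=
            norm_inner_le_norm _ _
        _ ≤ ‖u‖ * (‖S (lamseq n) - b n‖ * ‖v‖) :=
            mul_le_mul_of_nonneg_left ((S (lamseq n) - b n).le_opNorm v) (norm_nonneg u)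
        _ ≤ ‖u‖ * (ε * ‖v‖) :=
            mul_le_mul_of_nonneg_left
              (mul_le_mul_of_nonneg_right (hbdist n) (norm_nonneg v)) (norm_nonneg u)
        _ = ε * ‖v‖ * ‖u‖ := by ring
    set w := (S lam - blim) v with hw
    have h4 : ‖w‖ * ‖w‖ ≤ (ε * ‖v‖) * ‖w‖ := by
      have h5 := key w
      have h6 : ‖⟪w, w⟫_ℂ‖ = ‖w‖ * ‖w‖ := by
        rw [inner_self_eq_norm_sq_to_K, norm_pow, RCLike.norm_ofReal, abs_norm, pow_two]
      rw [h6] at h5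
      exact h5
    rcases eq_or_ne (‖w‖) 0 with hw0 | hw0
    · rw [hw0]
      positivity
    · have hwpos : 0 < ‖w‖ := lt_of_le_of_ne (norm_nonneg w) (Ne.symm hw0)
      exact le_of_mul_le_mul_right h4 hwpos
end
end

section
/- Let $X$ be a metric space, $I$ a countable set, and $(a_i)_{i\in I}$ a symmetrically summable family in $C^*_u(X)$, i.e., for every $\lambda \in \mathbb{D}^I$ the sum $a_\lambda = \sum_i \lambda_i a_i$ converges in the weak operator topology to an element of $C^*_u(X)$. Then for every $\epsilon > 0$ there exists $r > 0$ such that for all $\lambda \in \mathbb{D}^I$, the operator $a_\lambda$ can be $\epsilon$-$r$-approximated. -/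
/- Common setup: `ℓ²(X)`, matrix entries, propagation, approximation,
and the uniform Roe algebra as a set of bounded operators. -/

noncomputable section
open scoped InnerProductSpace
open Function

/-! The matrix coefficients `λ ↦ ⟪u, a_λ v⟫` are uniformly convergent series, so `λ ↦ a_λ` is
continuous from the compact space `𝔻^I` to `B(ℓ²(X))` with the weak operator topology. Closed
balls of `B(ℓ²(X))` are WOT-compact and the operators of propagation at most `r` form a WOT-closed
subspace, so their sum, the set of `ε`-`r`-approximable operators, is WOT-closed. By Baire, some
closed set `{λ | a_λ is (ε/2)-n-approximable}` contains a cylinder fixing finitely many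
coordinates `F`. Every `a_μ` differs from an element `a_ν` of that cylinder by the finite
combination `∑_{i ∈ F} (μ_i - ν_i) a_i` with coefficients of size at most `2`, which is
approximable with a propagation depending only on `F`. -/

open Filter Topology Metric ContinuousLinearMapWOT
open scoped Pointwise

section WeakOperatorTopology

variable {𝕜 E : Type*} [RCLike 𝕜] [NormedAddCommGroup E] [InnerProductSpace 𝕜 E]

lemma norm_inner_apply_le (A : E →L[𝕜] E) (w v : E) : ‖⟪w, A v⟫_𝕜‖ ≤ ‖A‖ * ‖w‖ * ‖v‖ :=
  calc ‖⟪w, A v⟫_𝕜‖ ≤ ‖w‖ * (‖A‖ * ‖v‖) :=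
        (norm_inner_le_norm w (A v)).trans (by gcongr; exact A.le_opNorm v)
    _ = ‖A‖ * ‖w‖ * ‖v‖ := by ring

variable [CompleteSpace E]

lemma exists_inner_eq_of_tendsto_inner {α : Type*} {l : Filter α} [l.NeBot]
    {b : α → E →L[𝕜] E} {M : ℝ} (hb : ∀ᶠ μ in l, ‖b μ‖ ≤ M) {φ : E → E → 𝕜}
    (hφ : ∀ w v, Tendsto (fun μ => ⟪w, b μ v⟫_𝕜) l (𝓝 (φ w v))) :
    ∃ B : E →L[𝕜] E, ‖B‖ ≤ M ∧ ∀ w v, ⟪w, B v⟫_𝕜 = φ w v := by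
  have hM : 0 ≤ M := let ⟨μ, hμ⟩ := hb.exists; (norm_nonneg _).trans hμ
  have lim_eq : ∀ w v z, Tendsto (fun μ => ⟪w, b μ v⟫_𝕜) l (𝓝 z) → φ w v = z :=
    fun w v _ h => tendsto_nhds_unique (hφ w v) h
  let f : E →ₗ⋆[𝕜] E →ₗ[𝕜] 𝕜 := LinearMap.mk₂'ₛₗ (starRingEnd 𝕜) (RingHom.id 𝕜) φ
    (fun w w' v => lim_eq _ _ _ (by simpa only [inner_add_left] using (hφ w v).add (hφ w' v)))
    (fun c w v => lim_eq _ _ _ (by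
      simpa only [inner_smul_left, smul_eq_mul] using (hφ w v).const_mul _))
    (fun w v v' => lim_eq _ _ _ (by
      simpa only [map_add, inner_add_right] using (hφ w v).add (hφ w v')))
    (fun c w v => lim_eq _ _ _ (by
      simpa only [map_smul, inner_smul_right, RingHom.id_apply, smul_eq_mul] using
        (hφ w v).const_mul c))
  have hf : ∀ w v, ‖f w v‖ ≤ M * ‖w‖ * ‖v‖ := fun w v =>
    le_of_tendsto (hφ w v).norm <| hb.mono fun μ hμ =>
      (norm_inner_apply_le _ w v).trans (by gcongr)
  let F := f.mkContinuous₂ M hf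
  let C := InnerProductSpace.continuousLinearMapOfBilin F
  have hC : ‖C‖ ≤ M := C.opNorm_le_bound hM fun v => by
    simpa [C, InnerProductSpace.continuousLinearMapOfBilin] using
      (F.le_opNorm v).trans (by gcongr; exact LinearMap.mkContinuous₂_norm_le f hM hf)
  -- `C` represents the form as `⟪C w, v⟫`; its adjoint moves the operator to the right slot.
  refine ⟨ContinuousLinearMap.adjoint C, by rwa [ContinuousLinearMap.adjoint.norm_map],
    fun w v => ?_⟩
  rw [ContinuousLinearMap.adjoint_inner_right, InnerProductSpace.continuousLinearMapOfBilin_apply]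
  rfl

lemma ContinuousLinearMapWOT.isCompact_image_ofCLM_closedBall (r : ℝ) :
    IsCompact (ofCLM '' closedBall (0 : E →L[𝕜] E) r : Set (E →WOT[𝕜] E)) := by
  rw [isCompact_iff_ultrafilter_le_nhds]
  intro 𝒰 h𝒰
  have hbound : ∀ᶠ T in (𝒰 : Filter (E →WOT[𝕜] E)), ‖toCLM T‖ ≤ r := by
    filter_upwards [le_principal_iff.mp h𝒰]
    rintro _ ⟨A, hA, rfl⟩
    simpa using hA
  have hconv : ∀ w v, ∃ z, Tendsto (fun T : E →WOT[𝕜] E => ⟪w, T v⟫_𝕜) 𝒰 (𝓝 z) := by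
    intro w v
    obtain ⟨z, -, hz⟩ := (isCompact_closedBall (0 : 𝕜) (r * ‖w‖ * ‖v‖)).ultrafilter_le_nhds
      (𝒰.map fun T => ⟪w, T v⟫_𝕜) <| le_principal_iff.mpr <| hbound.mono fun T hT => by
        simpa using (norm_inner_apply_le (toCLM T) w v).trans (by gcongr)
    exact ⟨z, hz⟩
  choose φ hφ using hconv
  obtain ⟨B, hB, hBφ⟩ := exists_inner_eq_of_tendsto_inner hbound hφ
  refine ⟨ofCLM B, ⟨B, by simpa using hB, rfl⟩, ?_⟩
  rw [le_nhds_iff_forall_inner_apply_le_nhds]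
  intro v w
  exact (hBφ w v).symm ▸ hφ w v

end WeakOperatorTopology

section Propagation

variable {X : Type*}

lemma entry_add (a b : H2 X →L[ℂ] H2 X) (x y : X) :
    entry (a + b) x y = entry a x y + entry b x y :=
  inner_add_right _ _ _

lemma entry_smul (c : ℂ) (a : H2 X →L[ℂ] H2 X) (x y : X) :
    entry (c • a) x y = c * entry a x y :=
  inner_smul_right _ _ _

variable [MetricSpace X]

variable (X) in
def propagationSubmodule (r : ℝ) : Submodule ℂ (H2 X →L[ℂ] H2 X) where
  carrier := {a | HasPropLE a r}
  zero_mem' x y _ := by simp [entry]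
  add_mem' {a b} ha hb x y hxy := by
    rw [entry_add, ha x y hxy, hb x y hxy, add_zero]
  smul_mem' c a ha x y hxy := by
    rw [entry_smul, ha x y hxy, mul_zero]

lemma HasPropLE.mono {a : H2 X →L[ℂ] H2 X} {r r' : ℝ} (h : HasPropLE a r) (hr : r ≤ r') :
    HasPropLE a r' := fun x y hxy => h x y (hr.trans_lt hxy)

lemma isClosed_setOf_hasPropLE (r : ℝ) :
    IsClosed {T : H2 X →WOT[ℂ] H2 X | HasPropLE (toCLM T) r} := by
  simp only [HasPropLE, Set.ofPred_forall]
  exact isClosed_iInter fun x => isClosed_iInter fun y => isClosed_iInter fun _ =>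
    isClosed_eq (continuous_inner_apply continuous_id _ _) continuous_const

lemma isClosed_setOf_isApprox (ε r : ℝ) :
    IsClosed {T : H2 X →WOT[ℂ] H2 X | IsApprox (toCLM T) ε r} := by
  have h : {T : H2 X →WOT[ℂ] H2 X | IsApprox (toCLM T) ε r} =
      ofCLM '' closedBall (0 : H2 X →L[ℂ] H2 X) ε +
        {T : H2 X →WOT[ℂ] H2 X | HasPropLE (toCLM T) r} := by
    ext T
    simp only [IsApprox, Set.mem_ofPred_eq, Set.mem_add, Set.mem_image, mem_closedBall_zero_iff]
    constructor
    · rintro ⟨b, hb, hTb⟩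
      exact ⟨ofCLM (toCLM T - b), ⟨_, hTb, rfl⟩, ofCLM b, hb, by ext; simp⟩
    · rintro ⟨_, ⟨k, hk, rfl⟩, p, hp, rfl⟩
      exact ⟨toCLM p, hp, by simpa using hk⟩
  rw [h]
  exact (isClosed_setOf_hasPropLE r).add_left_of_isCompact (isCompact_image_ofCLM_closedBall ε)

lemma IsApprox.mono {a : H2 X →L[ℂ] H2 X} {ε ε' r r' : ℝ} (h : IsApprox a ε r) (hε : ε ≤ ε')
    (hr : r ≤ r') : IsApprox a ε' r' :=
  let ⟨b, hb, hab⟩ := h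
  ⟨b, hb.mono hr, hab.trans hε⟩

lemma IsApprox.add {a a' : H2 X →L[ℂ] H2 X} {ε ε' r : ℝ} (h : IsApprox a ε r)
    (h' : IsApprox a' ε' r) : IsApprox (a + a') (ε + ε') r :=
  let ⟨b, hb, hab⟩ := h
  let ⟨b', hb', hab'⟩ := h'
  ⟨b + b', (propagationSubmodule X r).add_mem hb hb', by
    rw [add_sub_add_comm]; exact (norm_add_le _ _).trans (add_le_add hab hab')⟩

lemma IsApprox.smul {a : H2 X →L[ℂ] H2 X} {ε r : ℝ} (h : IsApprox a ε r) (c : ℂ) :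
    IsApprox (c • a) (‖c‖ * ε) r :=
  let ⟨b, hb, hab⟩ := h
  ⟨c • b, (propagationSubmodule X r).smul_mem c hb, by
    rw [← smul_sub]; exact (norm_smul_le c _).trans (by gcongr)⟩

lemma IsApprox.sum {ι : Type*} {s : Finset ι} {a : ι → H2 X →L[ℂ] H2 X} {ε : ι → ℝ} {r : ℝ}
    (h : ∀ i ∈ s, IsApprox (a i) (ε i) r) : IsApprox (∑ i ∈ s, a i) (∑ i ∈ s, ε i) r := by
  classical
  induction s using Finset.induction_on with
  | empty => exact ⟨0, (propagationSubmodule X r).zero_mem, by simp⟩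
  | insert i s hi ih =>
    simp only [Finset.sum_insert hi]
    exact (h i (s.mem_insert_self i)).add (ih fun j hj => h j (Finset.mem_insert_of_mem hj))

lemma exists_nat_isApprox_of_mem_roeSet {a : H2 X →L[ℂ] H2 X} (ha : a ∈ roeSet X) {ε : ℝ}
    (hε : 0 < ε) : ∃ n : ℕ, IsApprox a ε n := by
  obtain ⟨b, ⟨r, hb⟩, hab⟩ := Metric.mem_closure_iff.mp ha ε hε
  exact ⟨⌈r⌉₊, b, hb.mono (Nat.le_ceil r), (dist_eq_norm a b ▸ hab).le⟩

lemma exists_nat_forall_isApprox_of_mem_roeSet {ι : Type*} (s : Finset ι)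
    {a : ι → H2 X →L[ℂ] H2 X} (ha : ∀ i ∈ s, a i ∈ roeSet X) {ε : ℝ} (hε : 0 < ε) :
    ∃ n : ℕ, ∀ i ∈ s, IsApprox (a i) ε n := by
  choose! n hn using fun i hi => exists_nat_isApprox_of_mem_roeSet (ha i hi) hε
  exact ⟨s.sup n, fun i hi => (hn i hi).mono le_rfl (by exact_mod_cast s.le_sup hi)⟩

lemma exists_nat_forall_isApprox_sum_smul_of_mem_roeSet {ι : Type*} (s : Finset ι)
    {a : ι → H2 X →L[ℂ] H2 X} (ha : ∀ i ∈ s, a i ∈ roeSet X) (C : ℝ) {ε : ℝ} (hε : 0 < ε) :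
    ∃ n : ℕ, ∀ c : ι → ℂ, ∑ i ∈ s, ‖c i‖ ≤ C → IsApprox (∑ i ∈ s, c i • a i) ε n := by
  obtain ⟨n, hn⟩ := exists_nat_forall_isApprox_of_mem_roeSet s ha
    (show 0 < ε / (|C| + 1) by positivity)
  refine ⟨n, fun c hc => (IsApprox.sum fun i hi => (hn i hi).smul (c i)).mono ?_ le_rfl⟩
  calc ∑ i ∈ s, ‖c i‖ * (ε / (|C| + 1)) = (∑ i ∈ s, ‖c i‖) * (ε / (|C| + 1)) :=
        (Finset.sum_mul ..).symm
    _ ≤ (|C| + 1) * (ε / (|C| + 1)) := by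
        gcongr; exact hc.trans ((le_abs_self C).trans (by linarith))
    _ = ε := mul_div_cancel₀ _ (by positivity)

end Propagation

lemma sub_eq_sum_smul_of_hasSum {𝕜 E I : Type*} [RCLike 𝕜] [NormedAddCommGroup E]
    [InnerProductSpace 𝕜 E] {a : I → E →L[𝕜] E} {c d : I → 𝕜} {A B : E →L[𝕜] E}
    (hA : ∀ u v, HasSum (fun i => c i * ⟪u, a i v⟫_𝕜) ⟪u, A v⟫_𝕜)
    (hB : ∀ u v, HasSum (fun i => d i * ⟪u, a i v⟫_𝕜) ⟪u, B v⟫_𝕜)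
    {s : Finset I} (hcd : ∀ i ∉ s, c i = d i) :
    A - B = ∑ i ∈ s, (c i - d i) • a i := by
  ext v
  refine ext_inner_left 𝕜 fun u => ?_
  simp only [_root_.sub_apply, sum_apply, _root_.smul_apply, inner_sub_right, inner_sum,
    inner_smul_right]
  rw [((hA u v).sub (hB u v)).unique (hasSum_sum_of_ne_finset_zero (s := s) fun i hi => by
    simp [hcd i hi])]
  simp only [sub_mul]

local notation "𝔻" => {z : ℂ // ‖z‖ ≤ 1}

instance : CompactSpace 𝔻 :=
  (isCompact_iff_compactSpace (s := {z : ℂ | ‖z‖ ≤ 1})).mp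
    (by simpa [closedBall] using isCompact_closedBall (0 : ℂ) 1)

lemma continuous_tsum_coe_mul {I : Type*} {f : I → ℂ} (hf : Summable fun i => ‖f i‖) :
    Continuous fun lam : I → 𝔻 => ∑' i, (lam i : ℂ) * f i :=
  continuous_tsum (fun i => by fun_prop) hf fun i lam => by
    simpa [norm_mul] using mul_le_of_le_one_left (norm_nonneg (f i)) (lam i).2

lemma continuous_ofCLM_of_hasSum {E I : Type*} [NormedAddCommGroup E] [InnerProductSpace ℂ E]
    [CompleteSpace E] {a : I → E →L[ℂ] E} {S : (I → 𝔻) → E →L[ℂ] E}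
    (hS : ∀ lam u v, HasSum (fun i => (lam i : ℂ) * ⟪u, a i v⟫_ℂ) ⟪u, S lam v⟫_ℂ) :
    Continuous fun lam => ofCLM (S lam) := by
  refine ContinuousLinearMapWOT.continuous fun v u => ?_
  have hsum : Summable fun i => ‖⟪u, a i v⟫_ℂ‖ :=
    summable_norm_iff.mpr (by simpa using (hS (fun _ => ⟨1, by simp⟩) u v).summable)
  have h := continuous_tsum_coe_mul hsum
  simp only [fun lam => (hS lam u v).tsum_eq] at h
  exact h

lemma exists_cylinder_subset_of_isClosed_cover {I : Type*} {A : I → Type*}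
    [∀ i, TopologicalSpace (A i)] [BaireSpace (∀ i, A i)] [Nonempty (∀ i, A i)]
    {U : ℕ → Set (∀ i, A i)} (hU : ∀ n, IsClosed (U n)) (hcover : ∀ x, ∃ n, x ∈ U n) :
    ∃ (n : ℕ) (x₀ : ∀ i, A i) (s : Finset I), ∀ x, (∀ i ∈ s, x i = x₀ i) → x ∈ U n := by
  obtain ⟨n, x₀, hx₀⟩ := nonempty_interior_of_iUnion_of_closed hU
    (Set.eq_univ_of_forall fun x => Set.mem_iUnion.mpr (hcover x))
  rw [mem_interior_iff_mem_nhds, nhds_pi, Filter.mem_pi'] at hx₀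
  obtain ⟨s, t, ht, hst⟩ := hx₀
  exact ⟨n, x₀, s, fun x hx => hst fun i hi => hx i hi ▸ mem_of_mem_nhds (ht i)⟩

theorem braga_farah_uniform_approximation_general
    {X : Type*} [MetricSpace X] {I : Type*}
    (a : I → (H2 X →L[ℂ] H2 X)) (ha : ∀ i, a i ∈ roeSet X)
    (S : (I → {z : ℂ // ‖z‖ ≤ 1}) → (H2 X →L[ℂ] H2 X))
    (hS_roe : ∀ lam : I → {z : ℂ // ‖z‖ ≤ 1}, S lam ∈ roeSet X)
    (hS_sum : ∀ (lam : I → {z : ℂ // ‖z‖ ≤ 1}) (u v : H2 X),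
      HasSum (fun i => (lam i : ℂ) * ⟪u, a i v⟫_ℂ) ⟪u, S lam v⟫_ℂ) :
    ∀ ε > (0 : ℝ), ∃ r > (0 : ℝ), ∀ lam : I → {z : ℂ // ‖z‖ ≤ 1},
      IsApprox (S lam) ε r := by
  classical
  intro ε hε
  have : Nonempty (I → 𝔻) := ⟨fun _ => ⟨0, by simp⟩⟩
  obtain ⟨n, lam₀, s, hs⟩ := exists_cylinder_subset_of_isClosed_cover
    (U := fun n : ℕ => {lam | IsApprox (S lam) (ε / 2) n})
    (fun n => (isClosed_setOf_isApprox _ _).preimage (continuous_ofCLM_of_hasSum hS_sum))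
    (fun lam => exists_nat_isApprox_of_mem_roeSet (hS_roe lam) (half_pos hε))
  obtain ⟨m, hm⟩ := exists_nat_forall_isApprox_sum_smul_of_mem_roeSet s (fun i _ => ha i)
    (2 * s.card) (half_pos hε)
  refine ⟨(n + m + 1 : ℕ), by positivity, fun mu => ?_⟩
  set nu := s.piecewise lam₀ mu
  have hcoef : ∑ i ∈ s, ‖(mu i : ℂ) - nu i‖ ≤ 2 * s.card := by
    simpa [mul_comm] using Finset.sum_le_card_nsmul s _ 2 fun i _ =>
      (norm_sub_le _ _).trans (by linarith [(mu i).2, (nu i).2])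
  have hr : ∀ k ≤ n + m + 1, (k : ℝ) ≤ (n + m + 1 : ℕ) := fun k hk => by exact_mod_cast hk
  rw [← sub_add_cancel (S mu) (S nu), ← add_halves ε,
    sub_eq_sum_smul_of_hasSum (hS_sum mu) (hS_sum nu) (s := s) fun i hi => by simp [nu, hi]]
  exact ((hm _ hcoef).mono le_rfl (hr m (by omega))).add
    ((hs nu fun i hi => by simp [nu, hi]).mono le_rfl (hr n (by omega)))

/-- Braga–Farah: if `(a i)` is a symmetrically summable countable family in the
uniform Roe algebra (for every `λ ∈ 𝔻^I` the sum `a_λ = ∑ λ i • a i` converges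
in the weak operator topology to an element `S λ` of the uniform Roe algebra),
then for every `ε > 0` there is a single `r > 0` such that every `a_λ` can be
`ε`-`r`-approximated. -/
theorem braga_farah_uniform_approximation
    {X : Type*} [MetricSpace X] {I : Type*} [Countable I]
    (a : I → (H2 X →L[ℂ] H2 X)) (ha : ∀ i, a i ∈ roeSet X)
    (S : (I → {z : ℂ // ‖z‖ ≤ 1}) → (H2 X →L[ℂ] H2 X))
    (hS_roe : ∀ lam : I → {z : ℂ // ‖z‖ ≤ 1}, S lam ∈ roeSet X)
    (hS_sum : ∀ (lam : I → {z : ℂ // ‖z‖ ≤ 1}) (u v : H2 X),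
      HasSum (fun i => (lam i : ℂ) * ⟪u, a i v⟫_ℂ) ⟪u, S lam v⟫_ℂ) :
    ∀ ε > (0 : ℝ), ∃ r > (0 : ℝ), ∀ lam : I → {z : ℂ // ‖z‖ ≤ 1},
      IsApprox (S lam) ε r :=
  braga_farah_uniform_approximation_general a ha S hS_roe hS_sum
end
end
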